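/- arXiv:1204.6052 — 2 statements merged into one kernel-verified Lean document; each statement's English description precedes it below -/
import Mathlib

section
/- Let p = ⊗ᵢ₌₁ᵏ |e₁^(i)⟩⟨e₁^(i)| be a pure product state on H^(1)⊗…⊗H^(k), with each H^(i) of dimension n, and extend each |e₁^(i)⟩ to an orthonormal basis {|e_j^(i)⟩}_{j=1,…,n} of H^(i). Then the operators ⊗_{i<j}|e₁^(i)⟩⟨e₁^(i)| ⊗ σ_a(1m) ⊗ ⊗_{i>j}|e₁^(i)⟩⟨e₁^(i)| for a ∈ {1,2}, m = 2,…,n, j = 1,…,k (where σ₁(1m), σ₂(1m) are the generalized Pauli matrices acting on H^(j) in the chosen basis) all belong to the separable tangent space C(p), and they form a spanning set of C(p). -/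
/-! A generator `t = I ⊗ ⋯ ⊗ h ⊗ ⋯ ⊗ I` of `τ` commutes past every factor of
`p = ⊗ᵢ |eᵢ⟩⟨eᵢ|` except the `j`-th, so `i[p, t]` is `p` with its `j`-th factor replaced by
`i[|e⟩⟨e|, h]`. Expanding `h|e⟩ = ∑ₘ dₘ|eₘ⟩` in the orthonormal basis gives
`i[|e⟩⟨e|, h] = ∑ₘ (Im dₘ • σ₁(1m) + Re dₘ • σ₂(1m))`, where the term `m = 1` vanishes because
`d₁ = ⟨e|h|e⟩` is real. Conversely `σ₁(1m)` and `σ₂(1m)` are `i[|e⟩⟨e|, ·]` of the Hermitian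
traceless matrices `σ₂(m1)` and `σ₁(1m)`. -/

open Matrix
open scoped ComplexOrder

namespace EWitness

/-- Operators on the tensor product `H⁽¹⁾ ⊗ ⋯ ⊗ H⁽ᵏ⁾` of finite-dimensional complex
Hilbert spaces (with `dim H⁽ⁱ⁾ = n i`), modeled as matrices indexed by tuples. -/
abbrev Op {k : ℕ} (n : Fin k → ℕ) := Matrix (∀ i, Fin (n i)) (∀ i, Fin (n i)) ℂ

/-- Tensor (Kronecker) product of one operator per tensor factor. -/
def tensorOp {k : ℕ} (n : Fin k → ℕ) (A : ∀ i, Matrix (Fin (n i)) (Fin (n i)) ℂ) : Op n :=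
  Matrix.of fun x y => ∏ i, A i (x i) (y i)

/-- Tensor product of one vector per tensor factor. -/
def tensorVec {k : ℕ} (n : Fin k → ℕ) (v : ∀ i, Fin (n i) → ℂ) : (∀ i, Fin (n i)) → ℂ :=
  fun x => ∏ i, v i (x i)

/-- The rank one projector `|v⟩⟨v|`. -/
def proj {m : Type*} (v : m → ℂ) : Matrix m m ℂ := Matrix.vecMulVec v (star v)

/-- The trace inner product `(a,b) = Tr(a† b)` (its real part; on the real vector space of
Hermitian operators this is exactly the trace inner product, which is real-valued there). -/
noncomputable def tinner {m : Type*} [Fintype m] (a b : Matrix m m ℂ) : ℝ :=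
  ((aᴴ * b).trace).re

/-- A state: a positive semidefinite trace-one operator. -/
noncomputable def IsState {m : Type*} [Fintype m] (ρ : Matrix m m ℂ) : Prop :=
  ρ.PosSemidef ∧ ρ.trace = 1

/-- A pure product state `⊗ᵢ |e⁽ⁱ⁾⟩⟨e⁽ⁱ⁾|` with the `e⁽ⁱ⁾` unit vectors. -/
def IsPureProduct {k : ℕ} (n : Fin k → ℕ) (p : Op n) : Prop :=
  ∃ e : ∀ i, Fin (n i) → ℂ,
    (∀ i, star (e i) ⬝ᵥ e i = 1) ∧ p = tensorOp n fun i => proj (e i)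

/-- A separable state: a finite convex combination of tensor products of states. -/
noncomputable def IsSeparable {k : ℕ} (n : Fin k → ℕ) (ϱ : Op n) : Prop :=
  ∃ (N : ℕ) (w : Fin N → ℝ) (ρ : Fin N → ∀ i, Matrix (Fin (n i)) (Fin (n i)) ℂ),
    (∀ j, 0 ≤ w j) ∧ ((∑ j, w j) = 1) ∧ (∀ j i, IsState (ρ j i)) ∧
    ϱ = ∑ j, (w j : ℂ) • tensorOp n (ρ j)

/-- The generating set of `τ⁽ⁱ⁾`: operators `I ⊗ ⋯ ⊗ h⁽ⁱ⁾ ⊗ ⋯ ⊗ I`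
with `h⁽ⁱ⁾` Hermitian and traceless. -/
def tauGen {k : ℕ} (n : Fin k → ℕ) (i : Fin k) : Set (Op n) :=
  {T | ∃ h : Matrix (Fin (n i)) (Fin (n i)) ℂ, h.IsHermitian ∧ h.trace = 0 ∧
      T = tensorOp n (Function.update (fun j => (1 : Matrix (Fin (n j)) (Fin (n j)) ℂ)) i h)}

/-- `τ⁽ⁱ⁾`: the real span of operators `I ⊗ ⋯ ⊗ h⁽ⁱ⁾ ⊗ ⋯ ⊗ I`. -/
noncomputable def tauComp {k : ℕ} (n : Fin k → ℕ) (i : Fin k) : Submodule ℝ (Op n) :=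
  Submodule.span ℝ (tauGen n i)

/-- `τ = span(⋃ᵢ τ⁽ⁱ⁾)`. -/
noncomputable def tau {k : ℕ} (n : Fin k → ℕ) : Submodule ℝ (Op n) :=
  Submodule.span ℝ (⋃ i, tauGen n i)

/-- The separable tangent space `C(p) = {i[p,t] : t ∈ τ}`. -/
def sepTangent {k : ℕ} (n : Fin k → ℕ) (p : Op n) : Set (Op n) :=
  {x | ∃ t ∈ tau n, x = Complex.I • (p * t - t * p)}

/-- Condition (★): for every pure product state `p` orthogonal to `a`, the separable tangent
space `C(p)` is contained in the hyperplane `I_a = {x : (x,a) = 0}`. -/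
def StarCond {k : ℕ} (n : Fin k → ℕ) (a : Op n) : Prop :=
  ∀ p : Op n, IsPureProduct n p → tinner a p = 0 →
    sepTangent n p ⊆ {x : Op n | tinner x a = 0}

/-- An operator is supported on a subspace `W` if it vanishes on the orthogonal
complement of `W` and its range is contained in `W`. -/
def SupportedOn {m : Type*} [Fintype m] (W : Submodule ℂ (m → ℂ)) (M : Matrix m m ℂ) : Prop :=
  (∀ v, M.mulVec v ∈ W) ∧ (∀ v, (∀ w ∈ W, star w ⬝ᵥ v = 0) → M.mulVec v = 0)

section SingleFactor

variable {m : Type*}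

/- `pauli₁ (e l) (e m)` and `pauli₂ (e l) (e m)` are the generalized Pauli matrices `σ₁(lm)`,
`σ₂(lm)` written in the basis `e`. -/
def pauli₁ (u v : m → ℂ) : Matrix m m ℂ := vecMulVec u (star v) + vecMulVec v (star u)

def pauli₂ (u v : m → ℂ) : Matrix m m ℂ :=
  Complex.I • vecMulVec u (star v) - Complex.I • vecMulVec v (star u)

lemma isHermitian_pauli₁ (u v : m → ℂ) : (pauli₁ u v).IsHermitian := by
  simp only [IsHermitian, pauli₁, conjTranspose_add, conjTranspose_vecMulVec, star_star]
  exact add_comm _ _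

lemma isHermitian_pauli₂ (u v : m → ℂ) : (pauli₂ u v).IsHermitian := by
  simp only [IsHermitian, pauli₂, conjTranspose_sub, conjTranspose_smul, conjTranspose_vecMulVec,
    star_star, Complex.star_def, Complex.conj_I, neg_smul]
  abel

lemma pauli₂_self (u : m → ℂ) : pauli₂ u u = 0 := sub_self _

variable [Fintype m]

lemma star_dotProduct_eq_zero_comm {u v : m → ℂ} (huv : star u ⬝ᵥ v = 0) : star v ⬝ᵥ u = 0 := by
  rw [star_dotProduct, huv, star_zero]

lemma trace_pauli₁ {u v : m → ℂ} (huv : star u ⬝ᵥ v = 0) : (pauli₁ u v).trace = 0 := by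
  simp [pauli₁, dotProduct_comm _ (star _), huv, star_dotProduct_eq_zero_comm huv]

lemma trace_pauli₂ {u v : m → ℂ} (huv : star u ⬝ᵥ v = 0) : (pauli₂ u v).trace = 0 := by
  simp [pauli₂, dotProduct_comm _ (star _), huv, star_dotProduct_eq_zero_comm huv]

lemma proj_mul_vecMulVec (u v w : m → ℂ) :
    proj u * vecMulVec v (star w) = (star u ⬝ᵥ v) • vecMulVec u (star w) := by
  rw [proj, vecMulVec_mul_vecMulVec, vecMulVec_smul]

lemma vecMulVec_mul_proj (u v w : m → ℂ) :
    vecMulVec v (star w) * proj u = (star w ⬝ᵥ u) • vecMulVec v (star u) := by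
  rw [proj, vecMulVec_mul_vecMulVec, vecMulVec_smul]

section OrthonormalPair

variable {u v : m → ℂ} (hu : star u ⬝ᵥ u = 1) (huv : star u ⬝ᵥ v = 0)
include hu huv

lemma commutator_proj_pauli₁ :
    Complex.I • (proj u * pauli₁ u v - pauli₁ u v * proj u) = pauli₂ u v := by
  simp only [pauli₁, pauli₂, mul_add, add_mul, proj_mul_vecMulVec, vecMulVec_mul_proj, hu, huv,
    star_dotProduct_eq_zero_comm huv, one_smul, zero_smul, add_zero, zero_add, smul_sub]

lemma commutator_proj_pauli₂ :
    Complex.I • (proj u * pauli₂ v u - pauli₂ v u * proj u) = pauli₁ u v := by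
  simp only [pauli₁, pauli₂, mul_sub, sub_mul, Matrix.mul_smul, Matrix.smul_mul,
    proj_mul_vecMulVec, vecMulVec_mul_proj, hu, huv, star_dotProduct_eq_zero_comm huv, one_smul,
    smul_zero, zero_smul, sub_zero, zero_sub]
  rw [smul_sub, smul_neg, smul_smul, smul_smul, Complex.I_mul_I, neg_one_smul, neg_one_smul,
    neg_neg, sub_neg_eq_add]

end OrthonormalPair

end SingleFactor

lemma I_smul_conj_smul_sub_smul {M : Type*} [AddCommGroup M] [Module ℂ M] (d : ℂ) (x y : M) :
    Complex.I • (starRingEnd ℂ d • x - d • y)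
      = (d.im : ℂ) • (x + y) + (d.re : ℂ) • (Complex.I • x - Complex.I • y) := by
  conv_lhs => rw [← Complex.re_add_im d]
  match_scalars <;> apply Complex.ext <;> simp

section OrthonormalBasis

variable {m : Type*} [Fintype m] [DecidableEq m] {c : m → m → ℂ}
  (hc : ∀ j j', star (c j) ⬝ᵥ c j' = if j = j' then 1 else 0)
include hc

lemma sum_vecMulVec_star_self_eq_one : ∑ j, vecMulVec (c j) (star (c j)) = 1 := by
  set M : Matrix m m ℂ := Matrix.of fun x j => c j x
  have hM : Mᴴ * M = 1 := by
    ext j j'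
    simpa [M, mul_apply, one_apply, dotProduct] using hc j j'
  have hM' : M * Mᴴ = 1 := mul_eq_one_comm.mp hM
  ext x y
  simpa [M, Matrix.sum_apply, vecMulVec_apply, mul_apply] using congrFun₂ hM' x y

lemma eq_sum_star_dotProduct_smul (w : m → ℂ) : w = ∑ j, (star (c j) ⬝ᵥ w) • c j := by
  conv_lhs => rw [← one_mulVec w, ← sum_vecMulVec_star_self_eq_one hc]
  simp [sum_mulVec, vecMulVec_mulVec]

lemma commutator_proj_eq_sum (i₀ : m) {h : Matrix m m ℂ} (hh : h.IsHermitian) :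
    Complex.I • (proj (c i₀) * h - h * proj (c i₀))
      = ∑ j, (((star (c j) ⬝ᵥ h *ᵥ c i₀).im : ℂ) • pauli₁ (c i₀) (c j)
          + ((star (c j) ⬝ᵥ h *ᵥ c i₀).re : ℂ) • pauli₂ (c i₀) (c j)) := by
  set d : m → ℂ := fun j => star (c j) ⬝ᵥ h *ᵥ c i₀
  have hd : h *ᵥ c i₀ = ∑ j, d j • c j := eq_sum_star_dotProduct_smul hc _
  have hl : proj (c i₀) * h = ∑ j, starRingEnd ℂ (d j) • vecMulVec (c i₀) (star (c j)) := by
    rw [proj, vecMulVec_mul, ← hh.eq, ← star_mulVec, hd]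
    ext x y
    simp [Matrix.sum_apply, vecMulVec_apply, Finset.mul_sum, mul_left_comm]
  have hr : h * proj (c i₀) = ∑ j, d j • vecMulVec (c j) (star (c i₀)) := by
    rw [proj, mul_vecMulVec, hd]
    ext x y
    simp [Matrix.sum_apply, vecMulVec_apply, Finset.sum_mul, mul_assoc]
  simp only [hl, hr, ← Finset.sum_sub_distrib, Finset.smul_sum, I_smul_conj_smul_sub_smul]
  rfl

lemma commutator_proj_mem_span_pauli (i₀ : m) {h : Matrix m m ℂ} (hh : h.IsHermitian) :
    Complex.I • (proj (c i₀) * h - h * proj (c i₀)) ∈ Submodule.span ℝ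
      {T | ∃ j ≠ i₀, T = pauli₁ (c i₀) (c j) ∨ T = pauli₂ (c i₀) (c j)} := by
  rw [commutator_proj_eq_sum hc i₀ hh]
  refine Submodule.sum_mem _ fun j _ => ?_
  rcases eq_or_ne j i₀ with rfl | hj
  · have hre : (star (c j) ⬝ᵥ h *ᵥ c j).im = 0 := hh.im_star_dotProduct_mulVec_self _
    simp [hre, pauli₂_self]
  · rw [Complex.coe_smul, Complex.coe_smul]
    exact add_mem (Submodule.smul_mem _ _ (Submodule.subset_span ⟨j, hj, Or.inl rfl⟩))
      (Submodule.smul_mem _ _ (Submodule.subset_span ⟨j, hj, Or.inr rfl⟩))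

end OrthonormalBasis

section Tensor

variable {k : ℕ} {n : Fin k → ℕ}

lemma tensorOp_mul (A B : ∀ i, Matrix (Fin (n i)) (Fin (n i)) ℂ) :
    tensorOp n A * tensorOp n B = tensorOp n (A * B) := by
  ext x y
  simp only [tensorOp, of_apply, mul_apply, Pi.mul_apply, Finset.prod_mul_distrib.symm]
  rw [Finset.prod_univ_sum, Fintype.piFinset_univ]

variable (n) in
noncomputable def tensorOpMultilinear :
    MultilinearMap ℂ (fun i => Matrix (Fin (n i)) (Fin (n i)) ℂ) (Op n) where
  toFun := tensorOp n
  map_update_add' A i h h' := by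
    ext x y
    simp only [tensorOp, of_apply, Matrix.add_apply,
      Function.apply_update (fun j (M : Matrix (Fin (n j)) (Fin (n j)) ℂ) => M (x j) (y j)),
      Finset.prod_update_of_mem (Finset.mem_univ i), add_mul]
  map_update_smul' A i a h := by
    ext x y
    simp only [tensorOp, of_apply, Matrix.smul_apply,
      Function.apply_update (fun j (M : Matrix (Fin (n j)) (Fin (n j)) ℂ) => M (x j) (y j)),
      Finset.prod_update_of_mem (Finset.mem_univ i), smul_eq_mul, mul_assoc]

lemma commutator_tensorOp_update_one (A : ∀ i, Matrix (Fin (n i)) (Fin (n i)) ℂ) (i : Fin k)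
    (h : Matrix (Fin (n i)) (Fin (n i)) ℂ) :
    Complex.I • (tensorOp n A * tensorOp n (Function.update (fun _ => 1) i h)
        - tensorOp n (Function.update (fun _ => 1) i h) * tensorOp n A)
      = tensorOp n (Function.update A i (Complex.I • (A i * h - h * A i))) := by
  let B : ∀ j, Matrix (Fin (n j)) (Fin (n j)) ℂ := Function.update 1 i h
  have hl : A * B = Function.update A i (A i * h) := by
    conv_lhs => rw [← Function.update_eq_self i A]
    rw [← Function.update_mul, mul_one]
  have hr : B * A = Function.update A i (h * A i) := by
    conv_lhs => rw [← Function.update_eq_self i A]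
    rw [← Function.update_mul, one_mul]
  change Complex.I • (tensorOp n A * tensorOp n B - tensorOp n B * tensorOp n A) = _
  rw [tensorOp_mul, tensorOp_mul, hl, hr]
  have hsub := (tensorOpMultilinear n).map_update_sub A i (A i * h) (h * A i)
  have hsmul := (tensorOpMultilinear n).map_update_smul A i Complex.I (A i * h - h * A i)
  exact (hsmul.trans (congrArg (Complex.I • ·) hsub)).symm

lemma tensorOp_update_commutator_mem_sepTangent (A : ∀ i, Matrix (Fin (n i)) (Fin (n i)) ℂ)
    (i : Fin k) {h : Matrix (Fin (n i)) (Fin (n i)) ℂ} (hh : h.IsHermitian) (htr : h.trace = 0) :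
    tensorOp n (Function.update A i (Complex.I • (A i * h - h * A i)))
      ∈ sepTangent n (tensorOp n A) :=
  ⟨_, Submodule.subset_span (Set.mem_iUnion.2 ⟨i, h, hh, htr, rfl⟩),
    (commutator_tensorOp_update_one A i h).symm⟩

lemma sepTangent_subset_span {p : Op n} {S : Set (Op n)}
    (hS : ∀ i, ∀ g ∈ tauGen n i, Complex.I • (p * g - g * p) ∈ Submodule.span ℝ S) :
    sepTangent n p ⊆ Submodule.span ℝ S := by
  let f : Op n →ₗ[ℝ] Op n := Complex.I • (LinearMap.mulLeft ℝ p - LinearMap.mulRight ℝ p)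
  have hle : tau n ≤ (Submodule.span ℝ S).comap f :=
    Submodule.span_le.2 (Set.iUnion_subset hS)
  rintro _ ⟨t, ht, rfl⟩
  exact hle ht

lemma sepTangent_tensorOp_subset_span (A : ∀ i, Matrix (Fin (n i)) (Fin (n i)) ℂ)
    (S : ∀ i, Set (Matrix (Fin (n i)) (Fin (n i)) ℂ))
    (hS : ∀ i h, h.IsHermitian → Complex.I • (A i * h - h * A i) ∈ Submodule.span ℝ (S i)) :
    sepTangent n (tensorOp n A)
      ⊆ Submodule.span ℝ (⋃ i, (fun h => tensorOp n (Function.update A i h)) '' S i) := by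
  refine sepTangent_subset_span fun i _ ⟨h, hh, _, hg⟩ => ?_
  rw [hg, commutator_tensorOp_update_one]
  have := Submodule.apply_mem_span_image_of_mem_span
    (((tensorOpMultilinear n).toLinearMap A i).restrictScalars ℝ) (hS i h hh)
  exact Submodule.span_mono (Set.subset_iUnion_of_subset i subset_rfl) this

end Tensor

/-- Let `p = ⊗ᵢ |e₀⁽ⁱ⁾⟩⟨e₀⁽ⁱ⁾|` be a pure product state on the tensor
product of `k` Hilbert spaces of dimension `n`, where each `|e₀⁽ⁱ⁾⟩ = b i 0` is extended
to an orthonormal basis `{b i j}ⱼ`.  The operators obtained by replacing the `jj`-th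
factor by a generalized Pauli matrix `σ₁(1m)` or `σ₂(1m)` (in the chosen basis, here
`σ₁(1m) = |e₀⟩⟨eₘ| + |eₘ⟩⟨e₀|` and `σ₂(1m) = i|e₀⟩⟨eₘ| − i|eₘ⟩⟨e₀|`, `m ≠ 0`) all belong
to the separable tangent space `C(p)`, and they form a spanning set of `C(p)`. -/
theorem sepTangent_spanned_by_generalized_pauli {k n : ℕ} [NeZero n]
    (b : Fin k → Fin n → Fin n → ℂ)
    (hb : ∀ i j j', star (b i j) ⬝ᵥ b i j' = if j = j' then (1 : ℂ) else 0) :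
    (∀ (jj : Fin k) (m : Fin n), m ≠ 0 →
      tensorOp (fun _ => n) (Function.update (fun i => proj (b i 0)) jj
          (vecMulVec (b jj 0) (star (b jj m)) + vecMulVec (b jj m) (star (b jj 0))))
        ∈ sepTangent (fun _ => n) (tensorOp (fun _ => n) fun i => proj (b i 0)) ∧
      tensorOp (fun _ => n) (Function.update (fun i => proj (b i 0)) jj
          (Complex.I • vecMulVec (b jj 0) (star (b jj m))
            - Complex.I • vecMulVec (b jj m) (star (b jj 0))))
        ∈ sepTangent (fun _ => n) (tensorOp (fun _ => n) fun i => proj (b i 0))) ∧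
    sepTangent (fun _ => n) (tensorOp (fun _ => n) fun i => proj (b i 0)) ⊆
      ↑(Submodule.span ℝ
        {T : Op (fun _ : Fin k => n) | ∃ (jj : Fin k) (m : Fin n), m ≠ 0 ∧
          (T = tensorOp (fun _ => n) (Function.update (fun i => proj (b i 0)) jj
              (vecMulVec (b jj 0) (star (b jj m)) + vecMulVec (b jj m) (star (b jj 0)))) ∨
           T = tensorOp (fun _ => n) (Function.update (fun i => proj (b i 0)) jj
              (Complex.I • vecMulVec (b jj 0) (star (b jj m))
                - Complex.I • vecMulVec (b jj m) (star (b jj 0)))))}) := by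
  have hunit : ∀ i, star (b i 0) ⬝ᵥ b i 0 = 1 := fun i => by simpa using hb i 0 0
  have horth : ∀ i (m : Fin n), m ≠ 0 → star (b i 0) ⬝ᵥ b i m = 0 :=
    fun i m hm => by simpa [Ne.symm hm] using hb i 0 m
  refine ⟨fun jj m hm => ⟨?_, ?_⟩, ?_⟩
  · have hσ := tensorOp_update_commutator_mem_sepTangent (fun i => proj (b i 0)) jj
      (isHermitian_pauli₂ (b jj m) (b jj 0))
      (trace_pauli₂ (star_dotProduct_eq_zero_comm (horth jj m hm)))
    rwa [commutator_proj_pauli₂ (hunit jj) (horth jj m hm)] at hσ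
  · have hσ := tensorOp_update_commutator_mem_sepTangent (fun i => proj (b i 0)) jj
      (isHermitian_pauli₁ (b jj 0) (b jj m)) (trace_pauli₁ (horth jj m hm))
    rwa [commutator_proj_pauli₁ (hunit jj) (horth jj m hm)] at hσ
  · refine (sepTangent_tensorOp_subset_span _ _
      fun i _ hh => commutator_proj_mem_span_pauli (hb i) 0 hh).trans (Submodule.span_mono ?_)
    rintro _ ⟨_, ⟨i, rfl⟩, _, ⟨m, hm, rfl | rfl⟩, rfl⟩
    exacts [⟨i, m, hm, Or.inl rfl⟩, ⟨i, m, hm, Or.inr rfl⟩]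

end EWitness
end

section
/- Let a be a Hermitian operator on H^(1)⊗…⊗H^(k) with Tr(a ϱ) ≥ 0 for every separable state ϱ, let p = ⊗ᵢ|e₁^(i)⟩⟨e₁^(i)| be a pure product state with Tr(a p) = 0, let |e₂^(1)⟩ be a unit vector orthogonal to |e₁^(1)⟩, and let W = span{|e₁^(1)⟩,|e₂^(1)⟩} ⊗ ⊗_{i≥2} span{|e₁^(i)⟩}. Then the orthogonal projection a_W of a onto the Hermitian operators supported on W is either 0 or of the form λ |e₂^(1)⟩⟨e₂^(1)| ⊗ ⊗_{i=2}^{k}|e₁^(i)⟩⟨e₁^(i)| with λ > 0; in either case a_W is orthogonal (in the trace inner product) to σ₁(12) ⊗ ⊗_{i≥2}|e₁^(i)⟩⟨e₁^(i)| and to σ₂(12) ⊗ ⊗_{i≥2}|e₁^(i)⟩⟨e₁^(i)|, where σ₁(12), σ₂(12) act on span{|e₁^(1)⟩,|e₂^(1)⟩} as the Pauli matrices σ₁, σ₂ in the basis {|e₁^(1)⟩,|e₂^(1)⟩}. -/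
open Matrix
open scoped ComplexOrder

namespace EWitness

/-! Compressing `a` to the slice `H⁽¹⁾ ⊗ e₁⁽²⁾ ⊗ ⋯ ⊗ e₁⁽ᵏ⁾` through the isometry
`x ↦ x ⊗ e₁⁽²⁾ ⊗ ⋯ ⊗ e₁⁽ᵏ⁾` gives an operator `b` on `H⁽¹⁾` that is positive semidefinite,
because `a` is nonnegative on product states. As `⟨e₁⁽¹⁾|b|e₁⁽¹⁾⟩ = Tr(a p) = 0`, `b` kills
`e₁⁽¹⁾`, so `⟨w|a|u⟩ = 0` for `u = ⊗ᵢ e₁⁽ⁱ⁾` and `w = e₂ ⊗ e₁⁽²⁾ ⊗ ⋯`. The projection `a_W` has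
the same pairings as `a` with `|u⟩⟨u|`, `|w⟩⟨w|`, `σ₁(12)` and `σ₂(12)`, which are Hermitian and
supported on `W = span{u, w}`; an operator on `W` is determined by these pairings, so
`a_W = ⟨w|a|w⟩ |w⟩⟨w|` with `⟨w|a|w⟩ ≥ 0`. -/

section Hermitian

variable {m : Type*}

-- `σ₁(12)` and `σ₂(12)`: the Pauli matrices on `span{u, w}` in the basis `{u, w}`.
def pauliX (u w : m → ℂ) : Matrix m m ℂ := vecMulVec u (star w) + vecMulVec w (star u)

def pauliY (u w : m → ℂ) : Matrix m m ℂ :=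
  Complex.I • vecMulVec w (star u) - Complex.I • vecMulVec u (star w)

lemma isHermitian_proj (v : m → ℂ) : (proj v).IsHermitian := by
  simp only [IsHermitian, proj, conjTranspose_vecMulVec, star_star]

lemma isHermitian_pauliX (u w : m → ℂ) : (pauliX u w).IsHermitian := by
  simp only [IsHermitian, pauliX, conjTranspose_add, conjTranspose_vecMulVec, star_star, add_comm]

lemma isHermitian_pauliY (u w : m → ℂ) : (pauliY u w).IsHermitian := by
  simp only [IsHermitian, pauliY, conjTranspose_sub, conjTranspose_smul, conjTranspose_vecMulVec,
    star_star, Complex.star_def, Complex.conj_I, neg_smul, sub_neg_eq_add, neg_add_eq_sub]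

end Hermitian

section TraceInner

variable {m : Type*} [Fintype m]

lemma vecMulVec_star_mulVec (x y v : m → ℂ) : vecMulVec x (star y) *ᵥ v = (star y ⬝ᵥ v) • x := by
  rw [vecMulVec_mulVec, op_smul_eq_smul]

lemma _root_.Matrix.IsHermitian.star_dotProduct_mulVec {M : Matrix m m ℂ} (hM : M.IsHermitian)
    (x y : m → ℂ) : star (star x ⬝ᵥ M *ᵥ y) = star y ⬝ᵥ M *ᵥ x := by
  rw [← star_dotProduct, star_mulVec, ← dotProduct_mulVec, hM.eq]

lemma _root_.Matrix.IsHermitian.coe_re_star_dotProduct_mulVec_self {M : Matrix m m ℂ}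
    (hM : M.IsHermitian) (x : m → ℂ) : ((star x ⬝ᵥ M *ᵥ x).re : ℂ) = star x ⬝ᵥ M *ᵥ x :=
  Complex.ext rfl (hM.im_star_dotProduct_mulVec_self x).symm

lemma star_dotProduct_conjTranspose_mul_mul_mulVec {l : Type*} [Fintype l]
    (B : Matrix l m ℂ) (A : Matrix l l ℂ) (x y : m → ℂ) :
    star x ⬝ᵥ (Bᴴ * A * B) *ᵥ y = star (B *ᵥ x) ⬝ᵥ A *ᵥ (B *ᵥ y) := by
  rw [star_mulVec, ← dotProduct_mulVec, mulVec_mulVec, mulVec_mulVec, Matrix.mul_assoc]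

lemma trace_conjTranspose_mul_vecMulVec (M : Matrix m m ℂ) (x y : m → ℂ) :
    (Mᴴ * vecMulVec x (star y)).trace = star (star x ⬝ᵥ M *ᵥ y) := by
  rw [mul_vecMulVec, trace_vecMulVec, dotProduct_comm, star_dotProduct, star_mulVec,
    conjTranspose_conjTranspose, ← dotProduct_mulVec]

lemma tinner_proj (M : Matrix m m ℂ) (x : m → ℂ) : tinner M (proj x) = (star x ⬝ᵥ M *ᵥ x).re := by
  rw [tinner, proj, trace_conjTranspose_mul_vecMulVec, Complex.star_def, Complex.conj_re]

lemma tinner_ofReal_smul (r : ℝ) (M X : Matrix m m ℂ) :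
    tinner M ((r : ℂ) • X) = r * tinner M X := by
  simp [tinner, Matrix.mul_smul, Matrix.trace_smul]

lemma tinner_sub_left (M N X : Matrix m m ℂ) : tinner (M - N) X = tinner M X - tinner N X := by
  simp [tinner, Matrix.conjTranspose_sub, Matrix.sub_mul]

lemma tinner_pauliX {M : Matrix m m ℂ} (hM : M.IsHermitian) (u w : m → ℂ) :
    tinner M (pauliX u w) = 2 * (star w ⬝ᵥ M *ᵥ u).re := by
  rw [tinner, pauliX, Matrix.mul_add, trace_add, trace_conjTranspose_mul_vecMulVec,
    trace_conjTranspose_mul_vecMulVec, hM.star_dotProduct_mulVec]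
  simp [two_mul]

lemma tinner_pauliY {M : Matrix m m ℂ} (hM : M.IsHermitian) (u w : m → ℂ) :
    tinner M (pauliY u w) = 2 * (star w ⬝ᵥ M *ᵥ u).im := by
  rw [tinner, pauliY, Matrix.mul_sub, Matrix.mul_smul, Matrix.mul_smul, trace_sub, trace_smul,
    trace_smul, trace_conjTranspose_mul_vecMulVec, trace_conjTranspose_mul_vecMulVec,
    hM.star_dotProduct_mulVec u]
  simp [two_mul]

lemma mul_vecMulVec_mul_conjTranspose {l : Type*} (B : Matrix l m ℂ) (x y : m → ℂ) :
    B * vecMulVec x (star y) * Bᴴ = vecMulVec (B *ᵥ x) (star (B *ᵥ y)) := by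
  rw [mul_vecMulVec, vecMulVec_mul, star_mulVec]

lemma mul_proj_mul_conjTranspose {l : Type*} (B : Matrix l m ℂ) (x : m → ℂ) :
    B * proj x * Bᴴ = proj (B *ᵥ x) :=
  mul_vecMulVec_mul_conjTranspose B x x

lemma mul_pauliX_mul_conjTranspose {l : Type*} (B : Matrix l m ℂ) (u w : m → ℂ) :
    B * pauliX u w * Bᴴ = pauliX (B *ᵥ u) (B *ᵥ w) := by
  rw [pauliX, Matrix.mul_add, Matrix.add_mul, mul_vecMulVec_mul_conjTranspose,
    mul_vecMulVec_mul_conjTranspose, pauliX]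

lemma mul_pauliY_mul_conjTranspose {l : Type*} (B : Matrix l m ℂ) (u w : m → ℂ) :
    B * pauliY u w * Bᴴ = pauliY (B *ᵥ u) (B *ᵥ w) := by
  rw [pauliY, Matrix.mul_sub, Matrix.sub_mul, Matrix.mul_smul, Matrix.mul_smul, Matrix.smul_mul,
    Matrix.smul_mul, mul_vecMulVec_mul_conjTranspose, mul_vecMulVec_mul_conjTranspose, pauliY]

lemma isState_smul_proj {c : ℂ} {v : m → ℂ} (hc : 0 ≤ c) (hv : c * (star v ⬝ᵥ v) = 1) :
    IsState (c • proj v) :=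
  ⟨(posSemidef_vecMulVec_self_star v).smul hc, by
    rw [trace_smul, proj, trace_vecMulVec, dotProduct_comm, smul_eq_mul, hv]⟩

end TraceInner

section Support

variable {m : Type*} [Fintype m] {W : Submodule ℂ (m → ℂ)}

lemma supportedOn_vecMulVec {x y : m → ℂ} (hx : x ∈ W) (hy : y ∈ W) :
    SupportedOn W (vecMulVec x (star y)) := by
  refine ⟨fun v => ?_, fun v hv => ?_⟩ <;> rw [vecMulVec_star_mulVec]
  · exact W.smul_mem _ hx
  · rw [hv y hy, zero_smul]

lemma SupportedOn.add {M N : Matrix m m ℂ} (hM : SupportedOn W M) (hN : SupportedOn W N) :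
    SupportedOn W (M + N) := by
  refine ⟨fun v => ?_, fun v hv => ?_⟩ <;> rw [add_mulVec]
  · exact W.add_mem (hM.1 v) (hN.1 v)
  · rw [hM.2 v hv, hN.2 v hv, add_zero]

lemma SupportedOn.sub {M N : Matrix m m ℂ} (hM : SupportedOn W M) (hN : SupportedOn W N) :
    SupportedOn W (M - N) := by
  refine ⟨fun v => ?_, fun v hv => ?_⟩ <;> rw [sub_mulVec]
  · exact W.sub_mem (hM.1 v) (hN.1 v)
  · rw [hM.2 v hv, hN.2 v hv, sub_zero]

lemma SupportedOn.smul {M : Matrix m m ℂ} (c : ℂ) (hM : SupportedOn W M) :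
    SupportedOn W (c • M) := by
  refine ⟨fun v => ?_, fun v hv => ?_⟩ <;> rw [smul_mulVec]
  · exact W.smul_mem c (hM.1 v)
  · rw [hM.2 v hv, smul_zero]

lemma supportedOn_pauliX {u w : m → ℂ} (hu : u ∈ W) (hw : w ∈ W) : SupportedOn W (pauliX u w) :=
  (supportedOn_vecMulVec hu hw).add (supportedOn_vecMulVec hw hu)

lemma supportedOn_pauliY {u w : m → ℂ} (hu : u ∈ W) (hw : w ∈ W) : SupportedOn W (pauliY u w) :=
  ((supportedOn_vecMulVec hw hu).smul _).sub ((supportedOn_vecMulVec hu hw).smul _)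

end Support

section OrthonormalPair

variable {m : Type*} [Fintype m] {u w : m → ℂ}

lemma eq_of_mem_span_pair (hu : star u ⬝ᵥ u = 1) (hw : star w ⬝ᵥ w = 1) (huw : star u ⬝ᵥ w = 0)
    {z : m → ℂ} (hz : z ∈ Submodule.span ℂ {u, w}) :
    z = (star u ⬝ᵥ z) • u + (star w ⬝ᵥ z) • w := by
  have hwu : star w ⬝ᵥ u = 0 := by rw [star_dotProduct, huw, star_zero]
  obtain ⟨c, d, rfl⟩ := Submodule.mem_span_pair.mp hz
  simp [dotProduct_add, dotProduct_smul, hu, hw, huw, hwu]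

lemma star_dotProduct_sub_eq_zero_of_mem_span_pair (hu : star u ⬝ᵥ u = 1)
    (hw : star w ⬝ᵥ w = 1) (huw : star u ⬝ᵥ w = 0)
    {z : m → ℂ} (hz : z ∈ Submodule.span ℂ {u, w}) (v : m → ℂ) :
    star z ⬝ᵥ (v - ((star u ⬝ᵥ v) • u + (star w ⬝ᵥ v) • w)) = 0 := by
  have hwu : star w ⬝ᵥ u = 0 := by rw [star_dotProduct, huw, star_zero]
  obtain ⟨c, d, rfl⟩ := Submodule.mem_span_pair.mp hz
  simp only [star_add, star_smul, add_dotProduct, smul_dotProduct, dotProduct_sub, dotProduct_add,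
    dotProduct_smul, hu, hw, huw, hwu, smul_eq_mul, mul_one, mul_zero, add_zero, zero_add]
  ring

lemma SupportedOn.mulVec_eq (hu : star u ⬝ᵥ u = 1) (hw : star w ⬝ᵥ w = 1)
    (huw : star u ⬝ᵥ w = 0) {M : Matrix m m ℂ} (hM : SupportedOn (Submodule.span ℂ {u, w}) M)
    (v : m → ℂ) : M *ᵥ v = (star u ⬝ᵥ v) • M *ᵥ u + (star w ⬝ᵥ v) • M *ᵥ w := by
  have h := hM.2 _ fun z hz => star_dotProduct_sub_eq_zero_of_mem_span_pair hu hw huw hz v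
  rwa [mulVec_sub, mulVec_add, mulVec_smul, mulVec_smul, sub_eq_zero] at h

lemma SupportedOn.eq_smul_proj (hu : star u ⬝ᵥ u = 1) (hw : star w ⬝ᵥ w = 1)
    (huw : star u ⬝ᵥ w = 0) {M : Matrix m m ℂ} (hMh : M.IsHermitian)
    (hM : SupportedOn (Submodule.span ℂ {u, w}) M)
    (huMu : star u ⬝ᵥ M *ᵥ u = 0) (hwMu : star w ⬝ᵥ M *ᵥ u = 0) :
    M = (star w ⬝ᵥ M *ᵥ w) • proj w := by
  have hMu : M *ᵥ u = 0 := by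
    rw [eq_of_mem_span_pair hu hw huw (hM.1 u), huMu, hwMu, zero_smul, zero_smul, add_zero]
  set γ := star w ⬝ᵥ M *ᵥ w
  have hMw : M *ᵥ w = γ • w := by
    conv_lhs => rw [eq_of_mem_span_pair hu hw huw (hM.1 w), ← hMh.star_dotProduct_mulVec, hwMu,
      star_zero, zero_smul, zero_add]
  refine ext_iff_mulVec.mpr fun v => ?_
  rw [hM.mulVec_eq hu hw huw, hMu, hMw, smul_mulVec, proj, vecMulVec_star_mulVec, smul_zero,
    zero_add, smul_smul, smul_smul, mul_comm]

lemma SupportedOn.eq_tinner_proj_smul_proj (hu : star u ⬝ᵥ u = 1) (hw : star w ⬝ᵥ w = 1)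
    (huw : star u ⬝ᵥ w = 0) {M : Matrix m m ℂ} (hMh : M.IsHermitian)
    (hM : SupportedOn (Submodule.span ℂ {u, w}) M) (hMu : tinner M (proj u) = 0)
    (hX : tinner M (pauliX u w) = 0) (hY : tinner M (pauliY u w) = 0) :
    M = (tinner M (proj w) : ℂ) • proj w := by
  rw [tinner_proj] at hMu ⊢
  rw [tinner_pauliX hMh] at hX
  rw [tinner_pauliY hMh] at hY
  rw [hMh.coe_re_star_dotProduct_mulVec_self]
  refine hM.eq_smul_proj hu hw huw hMh ?_ (Complex.ext (by simpa using hX) (by simpa using hY))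
  rw [← hMh.coe_re_star_dotProduct_mulVec_self, hMu, Complex.ofReal_zero]

lemma SupportedOn.eq_smul_proj_and_tinner_pauli_eq_zero (hu : star u ⬝ᵥ u = 1)
    (hw : star w ⬝ᵥ w = 1) (huw : star u ⬝ᵥ w = 0) {M N : Matrix m m ℂ} (hN : N.IsHermitian)
    (hMh : M.IsHermitian) (hM : SupportedOn (Submodule.span ℂ {u, w}) M)
    (hproj : ∀ S : Matrix m m ℂ, S.IsHermitian → SupportedOn (Submodule.span ℂ {u, w}) S →
      tinner (N - M) S = 0)
    (hNu : tinner N (proj u) = 0) (hwNu : star w ⬝ᵥ N *ᵥ u = 0) :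
    M = (tinner N (proj w) : ℂ) • proj w ∧
      tinner M (pauliX u w) = 0 ∧ tinner M (pauliY u w) = 0 := by
  have huW : u ∈ Submodule.span ℂ {u, w} := Submodule.subset_span (Set.mem_insert _ _)
  have hwW : w ∈ Submodule.span ℂ {u, w} := Submodule.subset_span (Set.mem_insert_of_mem _ rfl)
  have htransfer : ∀ S, S.IsHermitian → SupportedOn (Submodule.span ℂ {u, w}) S →
      tinner M S = tinner N S := fun S hS hSW => by
    linarith [tinner_sub_left N M S, hproj S hS hSW]
  have hX : tinner M (pauliX u w) = 0 := by
    rw [htransfer _ (isHermitian_pauliX u w) (supportedOn_pauliX huW hwW), tinner_pauliX hN,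
      hwNu, Complex.zero_re, mul_zero]
  have hY : tinner M (pauliY u w) = 0 := by
    rw [htransfer _ (isHermitian_pauliY u w) (supportedOn_pauliY huW hwW), tinner_pauliY hN,
      hwNu, Complex.zero_im, mul_zero]
  refine ⟨?_, hX, hY⟩
  rw [← htransfer _ (isHermitian_proj w) (supportedOn_vecMulVec hwW hwW)]
  exact hM.eq_tinner_proj_smul_proj hu hw huw hMh
    (by rw [htransfer _ (isHermitian_proj u) (supportedOn_vecMulVec huW huW), hNu]) hX hY

end OrthonormalPair

section Tensor

variable {k : ℕ} {n : Fin k → ℕ}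

lemma tensorVec_update_apply (v : ∀ i, Fin (n i) → ℂ) (i₀ : Fin k) (y : Fin (n i₀) → ℂ)
    (x : ∀ i, Fin (n i)) :
    tensorVec n (Function.update v i₀ y) x = y (x i₀) * ∏ i ∈ Finset.univ.erase i₀, v i (x i) := by
  classical
  rw [tensorVec, ← Finset.mul_prod_erase _ _ (Finset.mem_univ i₀), Function.update_self]
  congr 1
  exact Finset.prod_congr rfl fun i hi => by rw [Function.update_of_ne (Finset.ne_of_mem_erase hi)]

lemma star_tensorVec_dotProduct (v v' : ∀ i, Fin (n i) → ℂ) :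
    star (tensorVec n v) ⬝ᵥ tensorVec n v' = ∏ i, star (v i) ⬝ᵥ v' i := by
  simp only [dotProduct, tensorVec, Pi.star_apply, star_prod, ← Finset.prod_mul_distrib]
  rw [← Fintype.piFinset_univ]
  exact (Finset.prod_univ_sum _ fun i j => star (v i j) * v' i j).symm

lemma tensorOp_update_apply (F : ∀ i, Matrix (Fin (n i)) (Fin (n i)) ℂ) (i₀ : Fin k)
    (A : Matrix (Fin (n i₀)) (Fin (n i₀)) ℂ) (x y : ∀ i, Fin (n i)) :
    tensorOp n (Function.update F i₀ A) x y
      = A (x i₀) (y i₀) * ∏ i ∈ Finset.univ.erase i₀, F i (x i) (y i) := by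
  classical
  rw [tensorOp, of_apply, ← Finset.mul_prod_erase _ _ (Finset.mem_univ i₀), Function.update_self]
  congr 1
  exact Finset.prod_congr rfl fun i hi => by rw [Function.update_of_ne (Finset.ne_of_mem_erase hi)]

def tensorSlice (n : Fin k → ℕ) (e : ∀ i, Fin (n i) → ℂ) (i₀ : Fin k) :
    Matrix (∀ i, Fin (n i)) (Fin (n i₀)) ℂ :=
  Matrix.of fun x j => tensorVec n (Function.update e i₀ (Pi.single j 1)) x

variable (e : ∀ i, Fin (n i) → ℂ) (i₀ : Fin k)

lemma tensorSlice_mulVec (y : Fin (n i₀) → ℂ) :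
    tensorSlice n e i₀ *ᵥ y = tensorVec n (Function.update e i₀ y) := by
  ext x
  simp [tensorSlice, mulVec, dotProduct, tensorVec_update_apply, Pi.single_apply, mul_comm]

lemma tensorOp_update_proj (A : Matrix (Fin (n i₀)) (Fin (n i₀)) ℂ) :
    tensorOp n (Function.update (fun i => proj (e i)) i₀ A)
      = tensorSlice n e i₀ * A * (tensorSlice n e i₀)ᴴ := by
  ext x y
  rw [tensorOp_update_apply]
  simp only [tensorSlice, proj, mul_apply, of_apply, conjTranspose_apply, vecMulVec_apply,
    tensorVec_update_apply, Pi.single_apply, Pi.star_apply, RCLike.star_def, star_prod,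
    Finset.prod_mul_distrib, apply_ite, ite_mul, one_mul, zero_mul, star_zero, mul_zero,
    Finset.sum_ite_eq, Finset.mem_univ, if_true]
  ring

lemma star_tensorSlice_mulVec_dotProduct (he : ∀ i ≠ i₀, star (e i) ⬝ᵥ e i = 1)
    (x y : Fin (n i₀) → ℂ) :
    star (tensorSlice n e i₀ *ᵥ x) ⬝ᵥ tensorSlice n e i₀ *ᵥ y = star x ⬝ᵥ y := by
  classical
  rw [tensorSlice_mulVec, tensorSlice_mulVec, star_tensorVec_dotProduct]
  simp_rw [Function.apply_update₂ (fun i (a b : Fin (n i) → ℂ) => star a ⬝ᵥ b)]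
  rw [Finset.prod_update_of_mem (Finset.mem_univ i₀)]
  rw [Finset.prod_eq_one fun i hi => he i (by simpa using hi), mul_one]

end Tensor

section Witness

variable {k : ℕ} {n : Fin k → ℕ} {a : Op n}

lemma isSeparable_tensorOp {ρ : ∀ i, Matrix (Fin (n i)) (Fin (n i)) ℂ} (hρ : ∀ i, IsState (ρ i)) :
    IsSeparable n (tensorOp n ρ) :=
  ⟨1, fun _ => 1, fun _ => ρ, fun _ => zero_le_one, by simp, fun _ => hρ, by simp⟩

variable {e : ∀ i, Fin (n i) → ℂ} {i₀ : Fin k}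

lemma tinner_proj_tensorVec_update_nonneg (hpos : ∀ ϱ : Op n, IsSeparable n ϱ → 0 ≤ tinner a ϱ)
    (he : ∀ i ≠ i₀, star (e i) ⬝ᵥ e i = 1) (y : Fin (n i₀) → ℂ) :
    0 ≤ tinner a (proj (tensorVec n (Function.update e i₀ y))) := by
  rcases eq_or_ne y 0 with rfl | hy
  · rw [← tensorSlice_mulVec, mulVec_zero]
    simp [tinner_proj]
  set s := (star y ⬝ᵥ y).re
  have hys : (s : ℂ) = star y ⬝ᵥ y :=
    (Complex.eq_re_of_ofReal_le (r := 0) (by exact_mod_cast dotProduct_star_self_nonneg y)).symm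
  have hs : 0 < s := (Complex.pos_iff.mp ((dotProduct_star_self_nonneg y).lt_of_ne
    (Ne.symm (dotProduct_star_self_eq_zero.not.mpr hy)))).1
  have hs_inv : 0 < s⁻¹ := inv_pos.mpr hs
  have hstate : ∀ i,
      IsState (Function.update (fun i => proj (e i)) i₀ (((s⁻¹ : ℝ) : ℂ) • proj y) i) := by
    intro i
    rcases eq_or_ne i i₀ with rfl | hi
    · rw [Function.update_self]
      refine isState_smul_proj (Complex.zero_le_real.mpr hs_inv.le) ?_
      rw [← hys, ← Complex.ofReal_mul, inv_mul_cancel₀ hs.ne', Complex.ofReal_one]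
    · rw [Function.update_of_ne hi]
      simpa using isState_smul_proj zero_le_one (by simpa using he i hi)
  have h := hpos _ (isSeparable_tensorOp hstate)
  rwa [tensorOp_update_proj, Matrix.mul_smul, Matrix.smul_mul, mul_proj_mul_conjTranspose,
    tinner_ofReal_smul, tensorSlice_mulVec, mul_nonneg_iff_of_pos_left hs_inv] at h

lemma posSemidef_conjTranspose_tensorSlice_mul_mul (ha : a.IsHermitian)
    (hpos : ∀ ϱ : Op n, IsSeparable n ϱ → 0 ≤ tinner a ϱ)
    (he : ∀ i ≠ i₀, star (e i) ⬝ᵥ e i = 1) :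
    ((tensorSlice n e i₀)ᴴ * a * tensorSlice n e i₀).PosSemidef := by
  refine .of_dotProduct_mulVec_nonneg (isHermitian_conjTranspose_mul_mul _ ha) fun y => ?_
  rw [star_dotProduct_conjTranspose_mul_mul_mulVec, ← ha.coe_re_star_dotProduct_mulVec_self,
    Complex.zero_le_real, ← tinner_proj, tensorSlice_mulVec]
  exact tinner_proj_tensorVec_update_nonneg hpos he y

lemma star_tensorVec_update_dotProduct_mulVec_eq_zero (ha : a.IsHermitian)
    (hpos : ∀ ϱ : Op n, IsSeparable n ϱ → 0 ≤ tinner a ϱ)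
    (he : ∀ i ≠ i₀, star (e i) ⬝ᵥ e i = 1) (hzero : tinner a (proj (tensorVec n e)) = 0)
    (y : Fin (n i₀) → ℂ) :
    star (tensorVec n (Function.update e i₀ y)) ⬝ᵥ a *ᵥ tensorVec n e = 0 := by
  set E := tensorSlice n e i₀
  have hE : E *ᵥ e i₀ = tensorVec n e := by rw [tensorSlice_mulVec, Function.update_eq_self]
  have hker : (Eᴴ * a * E) *ᵥ e i₀ = 0 := by
    rw [← (posSemidef_conjTranspose_tensorSlice_mul_mul ha hpos he).dotProduct_mulVec_zero_iff,
      star_dotProduct_conjTranspose_mul_mul_mulVec, hE, ← ha.coe_re_star_dotProduct_mulVec_self,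
      ← tinner_proj, hzero, Complex.ofReal_zero]
  rw [← tensorSlice_mulVec, ← hE, ← star_dotProduct_conjTranspose_mul_mul_mulVec, hker,
    dotProduct_zero]

end Witness

/-- Let `a` be Hermitian and nonnegative on separable states, let
`p = ⊗ᵢ|e₁⁽ⁱ⁾⟩⟨e₁⁽ⁱ⁾|` be a pure product state with `Tr(a p) = 0`, let `|e₂⟩ ⊥ |e₁⁽¹⁾⟩`
be a unit vector and `W = span{|e₁⁽¹⁾⟩,|e₂⟩} ⊗ ⊗ᵢ span{|e₁⁽ⁱ⁾⟩}`.  Then the orthogonal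
projection `a_W` of `a` onto the Hermitian operators supported on `W` is either `0` or
`λ |e₂⟩⟨e₂| ⊗ ⊗ᵢ|e₁⁽ⁱ⁾⟩⟨e₁⁽ⁱ⁾|` with `λ > 0`; in either case `a_W` is orthogonal to
`σ₁(12) ⊗ ⊗ᵢ|e₁⁽ⁱ⁾⟩⟨e₁⁽ⁱ⁾|` and `σ₂(12) ⊗ ⊗ᵢ|e₁⁽ⁱ⁾⟩⟨e₁⁽ⁱ⁾|`, where
`σ₁(12) = |e₁⟩⟨e₂| + |e₂⟩⟨e₁|` and `σ₂(12) = −i|e₁⟩⟨e₂| + i|e₂⟩⟨e₁|` act as the Pauli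
matrices on `span{|e₁⁽¹⁾⟩,|e₂⟩}` in the basis `{|e₁⁽¹⁾⟩,|e₂⟩}`. -/
theorem projection_of_witness_on_qubit_slice {k : ℕ} [NeZero k] (n : Fin k → ℕ)
    (a : Op n) (ha : a.IsHermitian)
    (hpos : ∀ ϱ : Op n, IsSeparable n ϱ → 0 ≤ tinner a ϱ)
    (e : ∀ i, Fin (n i) → ℂ) (he : ∀ i, star (e i) ⬝ᵥ e i = 1)
    (hzero : tinner a (tensorOp n fun i => proj (e i)) = 0)
    (e₂ : Fin (n 0) → ℂ) (he₂ : star e₂ ⬝ᵥ e₂ = 1) (horth : star (e 0) ⬝ᵥ e₂ = 0)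
    (aW : Op n) (haW : aW.IsHermitian)
    (haWsupp : SupportedOn (Submodule.span ℂ
      {tensorVec n e, tensorVec n (Function.update e 0 e₂)}) aW)
    (haWproj : ∀ x : Op n, x.IsHermitian →
      SupportedOn (Submodule.span ℂ
        {tensorVec n e, tensorVec n (Function.update e 0 e₂)}) x →
      tinner (a - aW) x = 0) :
    (aW = 0 ∨ ∃ lam : ℝ, 0 < lam ∧
        aW = (lam : ℂ) • tensorOp n (Function.update (fun i => proj (e i)) 0 (proj e₂))) ∧
    tinner aW (tensorOp n (Function.update (fun i => proj (e i)) 0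
        (vecMulVec (e 0) (star e₂) + vecMulVec e₂ (star (e 0))))) = 0 ∧
    tinner aW (tensorOp n (Function.update (fun i => proj (e i)) 0
        (Complex.I • vecMulVec e₂ (star (e 0))
          - Complex.I • vecMulVec (e 0) (star e₂)))) = 0 := by
  set u := tensorVec n e
  set w := tensorVec n (Function.update e 0 e₂)
  have hrest : ∀ i ≠ 0, star (e i) ⬝ᵥ e i = 1 := fun i _ => he i
  have hEu : tensorSlice n e 0 *ᵥ e 0 = u := by rw [tensorSlice_mulVec, Function.update_eq_self]
  have hEw : tensorSlice n e 0 *ᵥ e₂ = w := tensorSlice_mulVec e 0 e₂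
  have hu : star u ⬝ᵥ u = 1 := by rw [← hEu, star_tensorSlice_mulVec_dotProduct e 0 hrest, he]
  have hw : star w ⬝ᵥ w = 1 := by rw [← hEw, star_tensorSlice_mulVec_dotProduct e 0 hrest, he₂]
  have huw : star u ⬝ᵥ w = 0 := by
    rw [← hEu, ← hEw, star_tensorSlice_mulVec_dotProduct e 0 hrest, horth]
  rw [← Function.update_eq_self 0 (fun i => proj (e i)), tensorOp_update_proj,
    mul_proj_mul_conjTranspose, hEu] at hzero
  obtain ⟨hform, hX, hY⟩ := haWsupp.eq_smul_proj_and_tinner_pauli_eq_zero hu hw huw ha haW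
    haWproj hzero (star_tensorVec_update_dotProduct_mulVec_eq_zero ha hpos hrest hzero e₂)
  simp only [tensorOp_update_proj, mul_proj_mul_conjTranspose, hEw]
  refine ⟨?_, ?_, ?_⟩
  · rcases (tinner_proj_tensorVec_update_nonneg hpos hrest e₂).eq_or_lt with hlam | hlam
    · left
      rw [hform, ← hlam, Complex.ofReal_zero, zero_smul]
    · exact Or.inr ⟨_, hlam, hform⟩
  · rwa [← hEu, ← hEw, ← mul_pauliX_mul_conjTranspose] at hX
  · rwa [← hEu, ← hEw, ← mul_pauliY_mul_conjTranspose] at hY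

end EWitness
end
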